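/- Let G be a CDF on [θ̲, θ̄], φ_d ≥ 0, and let τ be the maximal solution of τ − φ_d = E_G[s | s ≤ τ] over τ ≥ s̲ (the lowest support point). Then for all τ' > τ, τ' − φ_d > E_G[s | s ≤ τ']. -/

import Mathlib

open MeasureTheory

noncomputable def condMean (P : Measure ℝ) (τ : ℝ) : ℝ :=
  if P (Set.Iic τ) = 0 then τ else (∫ x in Set.Iic τ, x ∂P) / (P (Set.Iic τ)).toReal

section aux
variable {θl θu : ℝ} {P : Measure ℝ} [IsProbabilityMeasure P]

lemma ae_mem_Icc (hsupp : P (Set.Icc θl θu)ᶜ = 0) : ∀ᵐ x ∂P, x ∈ Set.Icc θl θu := by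
  rw [ae_iff]
  convert hsupp using 2
  rfl

lemma integrable_id' (hsupp : P (Set.Icc θl θu)ᶜ = 0) : Integrable (fun x : ℝ => x) P := by
  refine Integrable.mono' (integrable_const (max |θl| |θu|))
    measurable_id.aestronglyMeasurable ?_
  filter_upwards [ae_mem_Icc hsupp] with x hx
  rw [Real.norm_eq_abs, abs_le]
  constructor
  · calc -(max |θl| |θu|) ≤ -|θl| := by
          simp [le_max_left]
      _ ≤ θl := neg_abs_le θl
      _ ≤ x := hx.1
  · exact hx.2.trans ((le_abs_self θu).trans (le_max_right _ _))

lemma condMean_mono (hsupp : P (Set.Icc θl θu)ᶜ = 0) : Monotone (condMean P) := by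
  have hint : Integrable (fun x : ℝ => x) P := integrable_id' hsupp
  intro a b hab
  by_cases ha : P (Set.Iic a) = 0
  · by_cases hb : P (Set.Iic b) = 0
    · simp [condMean, ha, hb, hab]
    · rw [condMean, if_pos ha, condMean, if_neg hb]
      have hμb : 0 < (P (Set.Iic b)).toReal :=
        ENNReal.toReal_pos hb (measure_ne_top P _)
      rw [le_div_iff₀ hμb]
      have h0 : P.restrict (Set.Iic b) (Set.Iic a) = 0 := by
        rw [Measure.restrict_apply measurableSet_Iic]
        exact measure_mono_null Set.inter_subset_left ha
      have hae : ∀ᵐ x ∂(P.restrict (Set.Iic b)), a ≤ x := by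
        rw [ae_iff]
        refine measure_mono_null ?_ h0
        intro x hx
        simpa using le_of_not_ge hx
      have h1 : ∫ x in Set.Iic b, a ∂P ≤ ∫ x in Set.Iic b, x ∂P :=
        integral_mono_ae (integrable_const a).integrableOn hint.integrableOn hae
      rw [setIntegral_const, smul_eq_mul, measureReal_def] at h1
      linarith [h1]
  · have hb : P (Set.Iic b) ≠ 0 := fun h =>
      ha (measure_mono_null (Set.Iic_subset_Iic.2 hab) h)
    simp only [condMean]
    rw [if_neg ha, if_neg hb]
    have hμa : 0 < (P (Set.Iic a)).toReal := ENNReal.toReal_pos ha (measure_ne_top P _)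
    have hμb : 0 < (P (Set.Iic b)).toReal := ENNReal.toReal_pos hb (measure_ne_top P _)
    rw [div_le_div_iff₀ hμa hμb]
    have hdisj : Disjoint (Set.Iic a) (Set.Ioc a b) := by
      simp [Set.disjoint_left]
      intro x hx h'
      linarith
    have hunion : Set.Iic a ∪ Set.Ioc a b = Set.Iic b := Set.Iic_union_Ioc_eq_Iic hab
    have hμ : (P (Set.Iic b)).toReal
        = (P (Set.Iic a)).toReal + (P (Set.Ioc a b)).toReal := by
      rw [← hunion, measure_union hdisj measurableSet_Ioc,
        ENNReal.toReal_add (measure_ne_top P _) (measure_ne_top P _)]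
    have hI : (∫ x in Set.Iic b, x ∂P)
        = (∫ x in Set.Iic a, x ∂P) + (∫ x in Set.Ioc a b, x ∂P) := by
      rw [← hunion, setIntegral_union hdisj measurableSet_Ioc hint.integrableOn
        hint.integrableOn]
    have h1 : ∫ x in Set.Iic a, x ∂P ≤ a * (P (Set.Iic a)).toReal := by
      have := setIntegral_mono_on hint.integrableOn (integrable_const a).integrableOn
        measurableSet_Iic (fun x hx => (by exact hx : x ≤ a))
      rwa [setIntegral_const, smul_eq_mul, mul_comm] at this
    have h2 : a * (P (Set.Ioc a b)).toReal ≤ ∫ x in Set.Ioc a b, x ∂P := by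
      have := setIntegral_mono_on (s := Set.Ioc a b) (integrable_const a).integrableOn hint.integrableOn
        measurableSet_Ioc (fun x hx => hx.1.le)
      rwa [setIntegral_const, smul_eq_mul, mul_comm] at this
    have hμ'0 : (0:ℝ) ≤ (P (Set.Ioc a b)).toReal := ENNReal.toReal_nonneg
    rw [hμ, hI]
    nlinarith [mul_le_mul_of_nonneg_right h1 hμ'0,
      mul_le_mul_of_nonneg_right h2 hμa.le]

lemma condMean_le (hsupp : P (Set.Icc θl θu)ᶜ = 0) (t : ℝ) (ht : P (Set.Iic t) ≠ 0) :
    condMean P t ≤ θu := by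
  rw [condMean, if_neg ht]
  have hμ : 0 < (P (Set.Iic t)).toReal := ENNReal.toReal_pos ht (measure_ne_top P _)
  rw [div_le_iff₀ hμ]
  have hae : ∀ᵐ x ∂(P.restrict (Set.Iic t)), x ≤ θu := by
    filter_upwards [ae_restrict_of_ae (ae_mem_Icc hsupp)] with x hx
    exact hx.2
  have := integral_mono_ae ((integrable_id' hsupp).integrableOn)
    (integrable_const θu).integrableOn hae
  rwa [setIntegral_const, smul_eq_mul, mul_comm] at this

end aux

/-- if `τ` is the greatest equilibrium threshold, then for every
`τ' > τ` one has `τ' − φd > E[s | s ≤ τ']`. -/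
theorem stmt11 (θl θu φd : ℝ) (P : Measure ℝ) [IsProbabilityMeasure P]
    (hlt : θl < θu) (hsupp : P (Set.Icc θl θu)ᶜ = 0) (hφ : 0 ≤ φd)
    (sl : ℝ) (hsl : sl = sInf {x : ℝ | P (Set.Iic x) ≠ 0})
    (τ : ℝ) (hτ : IsGreatest {τ' : ℝ | sl ≤ τ' ∧ condMean P τ' = τ' - φd} τ) :
    ∀ τ', τ < τ' → condMean P τ' < τ' - φd := by
  by_contra h
  push_neg at h
  obtain ⟨τ', hττ', hge⟩ := h
  -- the set of points where the conditional mean weakly exceeds t - φd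
  set S : Set ℝ := {t : ℝ | t ≤ condMean P t + φd} with hS
  have hmono := condMean_mono hsupp
  have hτ'S : τ' ∈ S := by
    simp only [hS, Set.mem_setOf_eq]
    linarith
  have hθu1 : P (Set.Iic θu) ≠ 0 := by
    have : P (Set.Iic θu)ᶜ = 0 := by
      refine measure_mono_null ?_ hsupp
      intro x hx
      simp only [Set.mem_compl_iff, Set.mem_Iic, not_le] at hx
      simp only [Set.mem_compl_iff, Set.mem_Icc, not_and, not_le]
      intro _; exact hx
    intro h0
    have := measure_univ (μ := P)
    rw [← Set.union_compl_self (Set.Iic θu)] at this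
    have hle := measure_union_le (μ := P) (Set.Iic θu) (Set.Iic θu)ᶜ
    rw [this, h0, ‹P (Set.Iic θu)ᶜ = 0›] at hle
    simp at hle
  have hbdd : ∀ t ∈ S, t ≤ θu + φd := by
    intro t ht
    by_cases h0 : P (Set.Iic t) = 0
    · have htu : t ≤ θu := by
        by_contra hc
        push_neg at hc
        exact hθu1 (measure_mono_null (Set.Iic_subset_Iic.2 hc.le) h0)
      linarith
    · have := condMean_le hsupp t h0
      have ht' : t ≤ condMean P t + φd := ht
      linarith
  have hSne : S.Nonempty := ⟨τ', hτ'S⟩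
  have hSbdd : BddAbove S := ⟨θu + φd, fun t ht => hbdd t ht⟩
  set σ := sSup S with hσ
  have hτ'σ : τ' ≤ σ := le_csSup hSbdd hτ'S
  have hσS : σ ∈ S := by
    simp only [hS, Set.mem_setOf_eq]
    refine csSup_le hSne ?_
    intro t ht
    have : t ≤ condMean P t + φd := ht
    have h2 : condMean P t ≤ condMean P σ := hmono (le_csSup hSbdd ht)
    linarith
  have hfix : condMean P σ = σ - φd := by
    have hle : σ ≤ condMean P σ + φd := hσS
    rcases eq_or_lt_of_le hle with h' | h'
    · linarith [h'.symm]
    · exfalso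
      set t := (σ + (condMean P σ + φd)) / 2 with hts
      have ht1 : σ < t := by simp [hts]; linarith
      have ht2 : t < condMean P σ + φd := by simp [hts]; linarith
      have htS : t ∈ S := by
        simp only [hS, Set.mem_setOf_eq]
        have := hmono ht1.le
        linarith
      exact absurd (le_csSup hSbdd htS) (not_le.2 ht1)
  have hslτ : sl ≤ τ := hτ.1.1
  have hmem : σ ∈ {τ'' : ℝ | sl ≤ τ'' ∧ condMean P τ'' = τ'' - φd} :=
    ⟨by linarith, hfix⟩
  have := hτ.2 hmem
  linarith
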